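/- arXiv:1910.03542 — 9 statements merged into one kernel-verified Lean document; each statement's English description precedes it below -/
import Mathlib

section
/- Let e : L → L^δ be a canonical extension of a frame L. Then e preserves the bottom element, the top element, finite meets, and directed joins (i.e., e is a preframe homomorphism preserving 0). -/
/-!
Under compactness, `⋀ e[F] ≤ e a` just says `a ∈ F`, and density reduces `u ≤ v` to showing
that every Scott-open filter `F` with `⋀ e[F] ≤ u` contains every `a` with `v ≤ e a`. Each
preservation property of `e` thereby becomes one of the closure properties of Scott-open
filters: upward closure (`⊥`), `⊤ ∈ F` (`⊤`), closure under `⊓` (meets), and inaccessibility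
by directed joins (directed joins).
-/

/-- A Scott-open filter of a frame: an upper set closed under finite meets such that
whenever a directed join lies in it, some member of the directed set lies in it. -/
structure IsScottOpenFilter {L : Type*} [Order.Frame L] (F : Set L) : Prop where
  mem_of_le : ∀ ⦃a b : L⦄, a ∈ F → a ≤ b → b ∈ F
  top_mem : ⊤ ∈ F
  inf_mem : ∀ ⦃a b : L⦄, a ∈ F → b ∈ F → a ⊓ b ∈ F
  scottOpen : ∀ D : Set L, D.Nonempty → DirectedOn (· ≤ ·) D → sSup D ∈ F → ∃ d ∈ D, d ∈ F

/-- Density axiom for a canonical extension of a frame. -/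
def IsCanonicalDense {L C : Type*} [Order.Frame L] [CompleteLattice C] (e : L → C) : Prop :=
  ∀ u v : C,
    (∀ (F : Set L) (a : L), IsScottOpenFilter F → sInf (e '' F) ≤ u → v ≤ e a →
      sInf (e '' F) ≤ e a) → u ≤ v

/-- Compactness axiom for a canonical extension of a frame. -/
def IsCanonicalCompact {L C : Type*} [Order.Frame L] [CompleteLattice C] (e : L → C) : Prop :=
  ∀ (F : Set L) (a : L), IsScottOpenFilter F → sInf (e '' F) ≤ e a → a ∈ F

namespace IsCanonicalDense

variable {L C : Type*} [Order.Frame L] [CompleteLattice C] {e : L → C}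

theorem le_of_forall_mem (hdense : IsCanonicalDense e) {u v : C}
    (h : ∀ (F : Set L) (a : L), IsScottOpenFilter F → sInf (e '' F) ≤ u → v ≤ e a → a ∈ F) :
    u ≤ v :=
  hdense u v fun F a hF hu hv => sInf_le (Set.mem_image_of_mem e (h F a hF hu hv))

theorem map_top (hdense : IsCanonicalDense e) : e ⊤ = ⊤ :=
  top_le_iff.mp <| hdense ⊤ (e ⊤) fun _ _ hF _ hv =>
    (sInf_le (Set.mem_image_of_mem e hF.top_mem)).trans hv

theorem map_bot (hdense : IsCanonicalDense e) (hcompact : IsCanonicalCompact e) : e ⊥ = ⊥ :=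
  le_bot_iff.mp <| hdense.le_of_forall_mem fun F _ hF hbot _ =>
    hF.mem_of_le (hcompact F ⊥ hF hbot) bot_le

theorem map_inf (hmono : Monotone e) (hdense : IsCanonicalDense e)
    (hcompact : IsCanonicalCompact e) (a b : L) : e (a ⊓ b) = e a ⊓ e b := by
  refine le_antisymm (le_inf (hmono inf_le_left) (hmono inf_le_right)) ?_
  refine hdense.le_of_forall_mem fun F c hF hab hc => ?_
  have ha : a ∈ F := hcompact F a hF (hab.trans inf_le_left)
  have hb : b ∈ F := hcompact F b hF (hab.trans inf_le_right)
  exact hcompact F c hF ((sInf_le (Set.mem_image_of_mem e (hF.inf_mem ha hb))).trans hc)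

theorem map_sSup_of_directedOn (hmono : Monotone e) (hdense : IsCanonicalDense e)
    (hcompact : IsCanonicalCompact e) {D : Set L} (hne : D.Nonempty)
    (hdir : DirectedOn (· ≤ ·) D) : e (sSup D) = sSup (e '' D) := by
  refine le_antisymm ?_ (sSup_le (Set.forall_mem_image.mpr fun d hd => hmono (le_sSup hd)))
  refine hdense.le_of_forall_mem fun F a hF hD ha => ?_
  obtain ⟨d, hdD, hdF⟩ := hF.scottOpen D hne hdir (hcompact F _ hF hD)
  refine hcompact F a hF ?_
  calc sInf (e '' F) ≤ e d := sInf_le (Set.mem_image_of_mem e hdF)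
    _ ≤ sSup (e '' D) := le_sSup (Set.mem_image_of_mem e hdD)
    _ ≤ e a := ha

end IsCanonicalDense

/-- A canonical extension `e : L → L^δ` of a frame preserves the bottom element, the
top element, binary (hence finite) meets, and directed joins: it is a preframe
homomorphism preserving `0`. -/
theorem canonicalExtension_preframeHom {L C : Type*} [Order.Frame L] [CompleteLattice C]
    (e : L → C) (hmono : Monotone e) (hdense : IsCanonicalDense e)
    (hcompact : IsCanonicalCompact e) :
    e ⊥ = ⊥ ∧ e ⊤ = ⊤ ∧ (∀ a b : L, e (a ⊓ b) = e a ⊓ e b) ∧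
      ∀ D : Set L, D.Nonempty → DirectedOn (· ≤ ·) D → e (sSup D) = sSup (e '' D) :=
  ⟨hdense.map_bot hcompact, hdense.map_top, hdense.map_inf hmono hcompact,
    fun _ hne hdir => hdense.map_sSup_of_directedOn hmono hcompact hne hdir⟩
end

section
/- Let e : L → L^δ be a canonical extension of a frame L. The map e^∨ : F ↦ ⋀e[F], from Scott-open filters of L (ordered by reverse inclusion) to L^δ, is injective, preserves the bottom element, binary joins, and filtered meets. -/
/-!
Compactness says that a Scott-open filter `F` is recovered from `⋀ e[F]` as the set of those
`a` with `⋀ e[F] ≤ e a`, which gives injectivity. Density reduces `⋀ e[H] ≤ v` to checking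
that every `a` with `v ≤ e a` lies in `H`; for `v = ⋀ e[F] ⊔ ⋀ e[G]` compactness puts such an
`a` in `F ∩ G`.
-/

theorem sInf_image_sUnion {α β : Type*} [CompleteLattice β] (e : α → β) (S : Set (Set α)) :
    sInf (e '' ⋃₀ S) = ⨅ F ∈ S, sInf (e '' F) := by
  rw [Set.image_sUnion, sInf_sUnion, iInf_image]

section CanonicalExtension

variable {L C : Type*} [Order.Frame L] [CompleteLattice C] {e : L → C}

theorem IsCanonicalCompact.mem_iff_sInf_image_le (hcompact : IsCanonicalCompact e)
    {F : Set L} (hF : IsScottOpenFilter F) {a : L} : a ∈ F ↔ sInf (e '' F) ≤ e a :=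
  ⟨fun ha => sInf_le (Set.mem_image_of_mem e ha), hcompact F a hF⟩

theorem IsCanonicalCompact.eq_of_sInf_image_eq (hcompact : IsCanonicalCompact e)
    {F G : Set L} (hF : IsScottOpenFilter F) (hG : IsScottOpenFilter G)
    (h : sInf (e '' F) = sInf (e '' G)) : F = G := by
  ext a
  rw [hcompact.mem_iff_sInf_image_le hF, hcompact.mem_iff_sInf_image_le hG, h]

theorem IsCanonicalDense.sInf_image_le (hdense : IsCanonicalDense e) {H : Set L} {v : C}
    (h : ∀ a, v ≤ e a → a ∈ H) : sInf (e '' H) ≤ v :=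
  hdense _ _ fun _ a _ hFH hva => hFH.trans (sInf_le (Set.mem_image_of_mem e (h a hva)))

theorem sInf_image_inter_eq_sup (hdense : IsCanonicalDense e) (hcompact : IsCanonicalCompact e)
    {F G : Set L} (hF : IsScottOpenFilter F) (hG : IsScottOpenFilter G) :
    sInf (e '' (F ∩ G)) = sInf (e '' F) ⊔ sInf (e '' G) := by
  refine le_antisymm (hdense.sInf_image_le fun a ha => ⟨?_, ?_⟩) (sup_le ?_ ?_)
  · exact (hcompact.mem_iff_sInf_image_le hF).2 (le_sup_left.trans ha)
  · exact (hcompact.mem_iff_sInf_image_le hG).2 (le_sup_right.trans ha)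
  · exact sInf_le_sInf (Set.image_mono Set.inter_subset_left)
  · exact sInf_le_sInf (Set.image_mono Set.inter_subset_right)

end CanonicalExtension

theorem canonicalExtension_eSO_properties_general {L C : Type*} [Order.Frame L] [CompleteLattice C]
    (e : L → C) (hdense : IsCanonicalDense e)
    (hcompact : IsCanonicalCompact e) :
    (∀ F G : Set L, IsScottOpenFilter F → IsScottOpenFilter G →
        sInf (e '' F) = sInf (e '' G) → F = G) ∧
    sInf (e '' (Set.univ : Set L)) = ⊥ ∧
    (∀ F G : Set L, IsScottOpenFilter F → IsScottOpenFilter G →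
        sInf (e '' (F ∩ G)) = sInf (e '' F) ⊔ sInf (e '' G)) ∧
    (∀ 𝓕 : Set (Set L), 𝓕.Nonempty → (∀ F ∈ 𝓕, IsScottOpenFilter F) →
        DirectedOn (· ⊆ ·) 𝓕 → sInf (e '' ⋃₀ 𝓕) = ⨅ F ∈ 𝓕, sInf (e '' F)) :=
  ⟨fun _ _ hF hG => hcompact.eq_of_sInf_image_eq hF hG,
    le_bot_iff.mp (hdense.sInf_image_le fun a _ => Set.mem_univ a),
    fun _ _ hF hG => sInf_image_inter_eq_sup hdense hcompact hF hG,
    fun 𝓕 _ _ _ => sInf_image_sUnion e 𝓕⟩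

/-- The map `e^∨ : F ↦ ⋀ e[F]` on Scott-open filters (ordered by reverse inclusion, so
that the bottom filter is `↑⊥ = L`, the join of `F` and `G` is `F ∩ G`, and filtered
meets are directed unions) is injective, preserves the bottom element, binary joins and
filtered meets. -/
theorem canonicalExtension_eSO_properties {L C : Type*} [Order.Frame L] [CompleteLattice C]
    (e : L → C) (hmono : Monotone e) (hdense : IsCanonicalDense e)
    (hcompact : IsCanonicalCompact e) :
    (∀ F G : Set L, IsScottOpenFilter F → IsScottOpenFilter G →
        sInf (e '' F) = sInf (e '' G) → F = G) ∧
    sInf (e '' (Set.univ : Set L)) = ⊥ ∧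
    (∀ F G : Set L, IsScottOpenFilter F → IsScottOpenFilter G →
        sInf (e '' (F ∩ G)) = sInf (e '' F) ⊔ sInf (e '' G)) ∧
    (∀ 𝓕 : Set (Set L), 𝓕.Nonempty → (∀ F ∈ 𝓕, IsScottOpenFilter F) →
        DirectedOn (· ⊆ ·) 𝓕 → sInf (e '' ⋃₀ 𝓕) = ⨅ F ∈ 𝓕, sInf (e '' F)) :=
  canonicalExtension_eSO_properties_general e hdense hcompact
end

section
/- If L is a locally compact (continuous) frame, then any canonical extension e : L → L^δ is an injective frame homomorphism. -/
/-- The way-below relation: `c ≪ a` iff every directed set whose join dominates `a`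
contains an element above `c`. -/
def WayBelow {L : Type*} [Order.Frame L] (c a : L) : Prop :=
  ∀ D : Set L, D.Nonempty → DirectedOn (· ≤ ·) D → a ≤ sSup D → ∃ d ∈ D, c ≤ d

/-!
A canonical extension reflects the order as soon as every way-below relation `c ≪ a` is
witnessed by a Scott-open filter `F` with `a ∈ F ⊆ ↑c`: if `e a ≤ e b`, then
`⋀ e[F] ≤ e b`, so `b ∈ F` by compactness and `c ≤ b`; continuity then gives `a ≤ b`.
In a continuous frame such filters exist, built from a descending `≪`-chain below `a`
obtained by interpolation. Preservation of joins, binary meets and `⊤` follows from the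
density axiom, since compactness turns the relevant inequalities into membership in `F`.
-/

section WayBelow

variable {L : Type*} [Order.Frame L]

theorem WayBelow.le {c a : L} (h : WayBelow c a) : c ≤ a := by
  obtain ⟨d, rfl, hcd⟩ :=
    h {a} (Set.singleton_nonempty a) (directedOn_singleton a) sSup_singleton.ge
  exact hcd

theorem WayBelow.mono_left {x c a : L} (hx : x ≤ c) (h : WayBelow c a) : WayBelow x a :=
  fun D hne hdir hle => (h D hne hdir hle).imp fun _ hd => ⟨hd.1, hx.trans hd.2⟩

theorem WayBelow.mono_right {c a b : L} (h : WayBelow c a) (hab : a ≤ b) : WayBelow c b :=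
  fun D hne hdir hle => h D hne hdir (hab.trans hle)

theorem bot_wayBelow (a : L) : WayBelow ⊥ a :=
  fun _ ⟨d, hd⟩ _ _ => ⟨d, hd, bot_le⟩

theorem WayBelow.sup {c d a : L} (hc : WayBelow c a) (hd : WayBelow d a) :
    WayBelow (c ⊔ d) a := by
  intro D hne hdir hle
  obtain ⟨d₁, hd₁, hc₁⟩ := hc D hne hdir hle
  obtain ⟨d₂, hd₂, hc₂⟩ := hd D hne hdir hle
  obtain ⟨d₃, hd₃, h₁₃, h₂₃⟩ := hdir d₁ hd₁ d₂ hd₂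
  exact ⟨d₃, hd₃, sup_le (hc₁.trans h₁₃) (hc₂.trans h₂₃)⟩

theorem WayBelow.exists_interpolate (hLC : ∀ a : L, a = sSup {c : L | WayBelow c a})
    {c a : L} (h : WayBelow c a) : ∃ b, WayBelow c b ∧ WayBelow b a := by
  set S : Set L := {d | ∃ b, WayBelow d b ∧ WayBelow b a}
  have hne : S.Nonempty := ⟨⊥, ⊥, bot_wayBelow ⊥, bot_wayBelow a⟩
  have hdir : DirectedOn (· ≤ ·) S := by
    rintro d₁ ⟨b₁, h₁, hb₁⟩ d₂ ⟨b₂, h₂, hb₂⟩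
    refine ⟨d₁ ⊔ d₂, ⟨b₁ ⊔ b₂, ?_, hb₁.sup hb₂⟩, le_sup_left, le_sup_right⟩
    exact (h₁.mono_right le_sup_left).sup (h₂.mono_right le_sup_right)
  -- `a = ⋁ {b ≪ a} = ⋁ {d ≪ b | b ≪ a} = ⋁ S`
  have hsup : a ≤ sSup S := by
    rw [hLC a]
    refine sSup_le fun b hb => ?_
    rw [hLC b]
    exact sSup_le fun d hd => le_sSup ⟨b, hd, hb⟩
  obtain ⟨d, ⟨b, hdb, hba⟩, hcd⟩ := h S hne hdir hsup
  exact ⟨b, hdb.mono_left hcd, hba⟩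

theorem WayBelow.exists_chain (hLC : ∀ a : L, a = sSup {c : L | WayBelow c a})
    {c a : L} (h : WayBelow c a) :
    ∃ x : ℕ → L, x 0 = a ∧ (∀ n, WayBelow c (x n)) ∧
      ∀ n, WayBelow (x (n + 1)) (x n) := by
  choose f hcf hfb using fun b : {b : L // WayBelow c b} => b.2.exists_interpolate hLC
  let g : {b : L // WayBelow c b} → {b : L // WayBelow c b} := fun b => ⟨f b, hcf b⟩
  refine ⟨fun n => (g^[n] ⟨a, h⟩).1, rfl, fun n => (g^[n] ⟨a, h⟩).2, fun n => ?_⟩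
  simpa only [Function.iterate_succ_apply'] using hfb (g^[n] ⟨a, h⟩)

theorem isScottOpenFilter_of_wayBelow_chain {x : ℕ → L}
    (hx : ∀ n, WayBelow (x (n + 1)) (x n)) :
    IsScottOpenFilter {z : L | ∃ n, WayBelow (x n) z} := by
  have hanti : Antitone x := antitone_nat_of_succ_le fun n => (hx n).le
  refine ⟨?_, ⟨1, (hx 0).mono_right le_top⟩, ?_, ?_⟩
  · rintro y z ⟨n, hn⟩ hyz
    exact ⟨n, hn.mono_right hyz⟩
  · rintro y z ⟨n, hn⟩ ⟨m, hm⟩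
    have hy : x (max n m) ≤ y := (hn.mono_left (hanti (le_max_left n m))).le
    have hz : x (max n m) ≤ z := (hm.mono_left (hanti (le_max_right n m))).le
    exact ⟨max n m + 1, (hx _).mono_right (le_inf hy hz)⟩
  · rintro D hne hdir ⟨n, hn⟩
    obtain ⟨d, hd, hxd⟩ := hn D hne hdir le_rfl
    exact ⟨d, hd, n + 1, (hx n).mono_right hxd⟩

theorem WayBelow.exists_scottOpenFilter (hLC : ∀ a : L, a = sSup {c : L | WayBelow c a})
    {c a : L} (h : WayBelow c a) :
    ∃ F : Set L, IsScottOpenFilter F ∧ a ∈ F ∧ ∀ z ∈ F, c ≤ z := by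
  obtain ⟨x, rfl, hcx, hx⟩ := h.exists_chain hLC
  refine ⟨_, isScottOpenFilter_of_wayBelow_chain hx, ⟨1, hx 0⟩, ?_⟩
  rintro z ⟨n, hn⟩
  exact (hcx n).le.trans hn.le

end WayBelow

section CanonicalExtension

variable {L C : Type*} [Order.Frame L] [CompleteLattice C] {e : L → C}

theorem IsCanonicalDense.monotone (hdense : IsCanonicalDense e) (hcompact : IsCanonicalCompact e) :
    Monotone e := fun a _ hab =>
  hdense _ _ fun F _ hF hFa hbx =>
    (sInf_le (Set.mem_image_of_mem e (hF.mem_of_le (hcompact F a hF hFa) hab))).trans hbx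

theorem IsCanonicalCompact.le_of_map_le (hLC : ∀ a : L, a = sSup {c : L | WayBelow c a})
    (hcompact : IsCanonicalCompact e) {a b : L} (hab : e a ≤ e b) : a ≤ b := by
  rw [hLC a]
  refine sSup_le fun c hc => ?_
  obtain ⟨F, hF, haF, hcF⟩ := hc.exists_scottOpenFilter hLC
  exact hcF b (hcompact F b hF ((sInf_le (Set.mem_image_of_mem e haF)).trans hab))

theorem IsCanonicalCompact.injective (hLC : ∀ a : L, a = sSup {c : L | WayBelow c a})
    (hcompact : IsCanonicalCompact e) : Function.Injective e := fun _ _ hab =>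
  le_antisymm (hcompact.le_of_map_le hLC hab.le) (hcompact.le_of_map_le hLC hab.ge)

theorem IsCanonicalDense.map_sSup (hLC : ∀ a : L, a = sSup {c : L | WayBelow c a})
    (hdense : IsCanonicalDense e) (hcompact : IsCanonicalCompact e) (S : Set L) :
    e (sSup S) = sSup (e '' S) := by
  refine le_antisymm ?_ (sSup_image.trans_le (hdense.monotone hcompact).le_map_sSup)
  refine hdense _ _ fun F a hF hFS hSa => ?_
  have hle : sSup S ≤ a := sSup_le fun s hs =>
    hcompact.le_of_map_le hLC ((le_sSup (Set.mem_image_of_mem e hs)).trans hSa)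
  exact sInf_le (Set.mem_image_of_mem e (hF.mem_of_le (hcompact F _ hF hFS) hle))

theorem IsCanonicalDense.map_inf_s12 (hdense : IsCanonicalDense e) (hcompact : IsCanonicalCompact e)
    (a b : L) : e (a ⊓ b) = e a ⊓ e b := by
  refine le_antisymm ((hdense.monotone hcompact).map_inf_le a b) ?_
  refine hdense _ _ fun F x hF hFab hx => ?_
  have haF : a ∈ F := hcompact F a hF (hFab.trans inf_le_left)
  have hbF : b ∈ F := hcompact F b hF (hFab.trans inf_le_right)
  exact (sInf_le (Set.mem_image_of_mem e (hF.inf_mem haF hbF))).trans hx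

theorem IsCanonicalDense.map_top_s12 (hdense : IsCanonicalDense e) : e ⊤ = ⊤ :=
  top_le_iff.mp <| hdense _ _ fun _ _ hF _ hx =>
    (sInf_le (Set.mem_image_of_mem e hF.top_mem)).trans hx

end CanonicalExtension

theorem canonicalExtension_locallyCompact_injective_frameHom_general {L C : Type*} [Order.Frame L]
    [CompleteLattice C] (hLC : ∀ a : L, a = sSup {c : L | WayBelow c a})
    (e : L → C) (hdense : IsCanonicalDense e)
    (hcompact : IsCanonicalCompact e) :
    Function.Injective e ∧
    (∀ S : Set L, e (sSup S) = sSup (e '' S)) ∧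
    (∀ a b : L, e (a ⊓ b) = e a ⊓ e b) ∧ e ⊤ = ⊤ :=
  ⟨hcompact.injective hLC, hdense.map_sSup hLC hcompact, hdense.map_inf_s12 hcompact,
    hdense.map_top_s12⟩

/-- If `L` is a locally compact (continuous) frame, then any canonical extension
`e : L → L^δ` is an injective frame homomorphism. -/
theorem canonicalExtension_locallyCompact_injective_frameHom {L C : Type*} [Order.Frame L]
    [CompleteLattice C] (hLC : ∀ a : L, a = sSup {c : L | WayBelow c a})
    (e : L → C) (hmono : Monotone e) (hdense : IsCanonicalDense e)
    (hcompact : IsCanonicalCompact e) :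
    Function.Injective e ∧
    (∀ S : Set L, e (sSup S) = sSup (e '' S)) ∧
    (∀ a b : L, e (a ⊓ b) = e a ⊓ e b) ∧ e ⊤ = ⊤ :=
  canonicalExtension_locallyCompact_injective_frameHom_general hLC e hdense hcompact
end

section
/- Let e : L → L^δ be a canonical extension of a frame L. For any collection {F_i}_{i∈I} of Scott-open filters of L, ⋁_i ⋀e[F_i] = ⋀ e[⋂_i F_i] in L^δ. -/
/-! By density it suffices that `⋀ e[⋂ F_i] ≤ e a` whenever the join lies below `e a`; then
every `⋀ e[F_i] ≤ e a`, and compactness puts `a` in every `F_i`. -/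

theorem iSup_sInf_image_le_sInf_image_iInter {L C : Type*} [CompleteLattice C] (e : L → C)
    {ι : Sort*} (F : ι → Set L) :
    (⨆ i, sInf (e '' F i)) ≤ sInf (e '' ⋂ i, F i) :=
  iSup_le fun i => sInf_le_sInf (Set.image_mono (Set.iInter_subset F i))

theorem IsCanonicalCompact.mem_iInter_of_iSup_le {L C : Type*} [Order.Frame L]
    [CompleteLattice C] {e : L → C} (hcompact : IsCanonicalCompact e) {ι : Sort*}
    {F : ι → Set L} (hF : ∀ i, IsScottOpenFilter (F i)) {a : L}
    (ha : (⨆ i, sInf (e '' F i)) ≤ e a) : a ∈ ⋂ i, F i :=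
  Set.mem_iInter.2 fun i => hcompact (F i) a (hF i) ((le_iSup _ i).trans ha)

theorem canonicalExtension_sup_eSO_inter_general {L C : Type*} [Order.Frame L] [CompleteLattice C]
    (e : L → C) (hdense : IsCanonicalDense e)
    (hcompact : IsCanonicalCompact e) {ι : Sort*} (F : ι → Set L)
    (hF : ∀ i, IsScottOpenFilter (F i)) :
    (⨆ i, sInf (e '' F i)) = sInf (e '' ⋂ i, F i) := by
  refine le_antisymm (iSup_sInf_image_le_sInf_image_iInter e F) ?_
  refine hdense _ _ fun G a _ hG_le hsup_le => ?_
  have ha : a ∈ ⋂ i, F i := hcompact.mem_iInter_of_iSup_le hF hsup_le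
  exact hG_le.trans (sInf_le ⟨a, ha, rfl⟩)

/-- For a canonical extension `e : L → L^δ` of a frame and any collection `{F_i}` of
Scott-open filters, `⋁_i ⋀ e[F_i] = ⋀ e[⋂_i F_i]`. -/
theorem canonicalExtension_sup_eSO_inter {L C : Type*} [Order.Frame L] [CompleteLattice C]
    (e : L → C) (hmono : Monotone e) (hdense : IsCanonicalDense e)
    (hcompact : IsCanonicalCompact e) {ι : Sort*} (F : ι → Set L)
    (hF : ∀ i, IsScottOpenFilter (F i)) :
    (⨆ i, sInf (e '' F i)) = sInf (e '' ⋂ i, F i) :=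
  canonicalExtension_sup_eSO_inter_general e hdense hcompact F hF
end

section
/- For any frame L, a canonical extension of L exists: define, on the lattice of filters of L ordered by reverse inclusion, the closure operator sending a filter F to the intersection of all Scott-open filters containing F; then its fixpoints (the filters that are intersections of Scott-open filters) form a complete lattice C, and the map e : L → C, a ↦ ⋂{F Scott-open | a ∈ F} (equivalently, the closure of the principal filter ↑a), is dense and compact. -/
/-! In `C`, `x ≤ e a ↔ a ∈ x`, so for a Scott-open filter `F` the meet of `e '' F` is `F` itself.
Compactness is then immediate, and density holds because every element of `C` is the
intersection of the Scott-open filters containing it. -/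

open Set

instance ClosureOperator.instCompleteLatticeCloseds {α : Type*} [CompleteLattice α]
    (c : ClosureOperator α) : CompleteLattice c.Closeds :=
  c.gi.liftCompleteLattice

section

variable {L : Type*} [Order.Frame L]

variable (L) in
def scottOpenFilterClosure : ClosureOperator (Set L) where
  toFun S := ⋂₀ {G | IsScottOpenFilter G ∧ S ⊆ G}
  monotone' _ _ hST := sInter_subset_sInter fun _ hG => ⟨hG.1, hST.trans hG.2⟩
  le_closure' _ := subset_sInter fun _ hG => hG.2
  idempotent' _ := subset_antisymm
    (sInter_subset_sInter fun _ hG => ⟨hG.1, sInter_subset_of_mem hG⟩)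
    (subset_sInter fun _ hG => hG.2)
  -- oriented so that `Closeds` unfolds to the subtype of the theorem
  IsClosed F := F = ⋂₀ {G | IsScottOpenFilter G ∧ F ⊆ G}
  isClosed_iff := eq_comm

theorem IsScottOpenFilter.eq_sInter {F : Set L} (hF : IsScottOpenFilter F) :
    F = ⋂₀ {G | IsScottOpenFilter G ∧ F ⊆ G} :=
  (subset_sInter fun _ hG => hG.2).antisymm (sInter_subset_of_mem ⟨hF, subset_rfl⟩)

variable (L) in
def CanonicalExtension : Type _ := {F : Set L // F = ⋂₀ {G | IsScottOpenFilter G ∧ F ⊆ G}}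

namespace CanonicalExtension

instance : SetLike (CanonicalExtension L) L where
  coe := Subtype.val
  coe_injective := Subtype.val_injective

instance : CompleteLattice (CanonicalExtension L) :=
  inferInstanceAs (CompleteLattice (scottOpenFilterClosure L).Closedsᵒᵈ)

theorem le_iff_subset {x y : CanonicalExtension L} : x ≤ y ↔ (y : Set L) ⊆ x :=
  Iff.rfl

theorem eq_sInter (x : CanonicalExtension L) :
    (x : Set L) = ⋂₀ {G | IsScottOpenFilter G ∧ (x : Set L) ⊆ G} :=
  x.2

def embed (a : L) : CanonicalExtension L := (scottOpenFilterClosure L).toCloseds {a}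

theorem coe_embed (a : L) :
    (embed a : Set L) = ⋂₀ {G : Set L | IsScottOpenFilter G ∧ a ∈ G} := by
  show ⋂₀ {G | IsScottOpenFilter G ∧ {a} ⊆ G} = _
  simp only [singleton_subset_iff]

theorem le_embed_iff {x : CanonicalExtension L} {a : L} : x ≤ embed a ↔ a ∈ x :=
  ((scottOpenFilterClosure L).gi.gc {a} x).trans singleton_subset_iff

def ofScottOpenFilter {F : Set L} (hF : IsScottOpenFilter F) : CanonicalExtension L :=
  ⟨F, hF.eq_sInter⟩

theorem sInf_embed_image {F : Set L} (hF : IsScottOpenFilter F) :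
    sInf (embed '' F) = ofScottOpenFilter hF :=
  eq_of_forall_le_iff fun w => by
    simp only [le_sInf_iff, forall_mem_image, le_embed_iff]
    rfl

theorem isCanonicalCompact_embed : IsCanonicalCompact (embed : L → CanonicalExtension L) :=
  fun _ _ hF h => le_embed_iff.1 (sInf_embed_image hF ▸ h)

theorem isCanonicalDense_embed : IsCanonicalDense (embed : L → CanonicalExtension L) := by
  intro u v h
  refine le_iff_subset.2 fun a ha => ?_
  rw [eq_sInter u]
  refine mem_sInter.2 fun G ⟨hG, huG⟩ => ?_
  have hGa := h G a hG (by rwa [sInf_embed_image hG]) (le_embed_iff.2 ha)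
  rwa [sInf_embed_image hG, le_embed_iff] at hGa

end CanonicalExtension

end

/-- Existence of canonical extensions: for any frame `L`, the fixpoints of the closure
operator on filters sending `F` to the intersection of all Scott-open filters
containing it (i.e. the filters which are intersections of Scott-open filters), ordered
by reverse inclusion, form a complete lattice `C`, and the map
`e : a ↦ ⋂{F Scott-open | a ∈ F}` (the closure of `↑a`) is dense and compact. -/
theorem canonicalExtension_exists {L : Type*} [Order.Frame L] :
    ∃ (inst : CompleteLattice {F : Set L // F = ⋂₀ {G : Set L | IsScottOpenFilter G ∧ F ⊆ G}})
      (e : L → {F : Set L // F = ⋂₀ {G : Set L | IsScottOpenFilter G ∧ F ⊆ G}}),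
      (∀ x y : {F : Set L // F = ⋂₀ {G : Set L | IsScottOpenFilter G ∧ F ⊆ G}},
          inst.le x y ↔ (y : Set L) ⊆ (x : Set L)) ∧
      (∀ a : L, (e a : Set L) = ⋂₀ {G : Set L | IsScottOpenFilter G ∧ a ∈ G}) ∧
      @IsCanonicalDense L _ _ inst e ∧ @IsCanonicalCompact L _ _ inst e :=
  ⟨inferInstanceAs (CompleteLattice (CanonicalExtension L)), CanonicalExtension.embed,
    fun _ _ => Iff.rfl, CanonicalExtension.coe_embed, CanonicalExtension.isCanonicalDense_embed,
    CanonicalExtension.isCanonicalCompact_embed⟩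
end

section
/- Canonical extensions of a frame are unique: if e : L → C and e' : L → C' are both dense and compact monotone maps from a frame L into complete lattices, then there is a (unique) complete lattice isomorphism ι : C' → C with ι ∘ e' = e. -/
/-!
A dense and compact `e : L → C` recovers every element of `C` from `L`: by density, `u ≤ v`
as soon as every filter element `⋀ e[F]` below `u` lies below `v`, and by compactness
`⋀ e[F] ≤ e a` holds exactly when `a ∈ F`, a condition that no longer mentions `e`.
Hence the comparison map `v ↦ ⋁ {⋀ e[F] | ⋀ e'[F] ≤ v}` and its counterpart in the
other direction are mutually inverse monotone maps over `L`. Uniqueness needs density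
alone: an order automorphism fixing the image of `e` fixes every `u`, since
`u ≤ e a` implies `φ u ≤ φ (e a) = e a`.
-/

namespace IsCanonicalDense

variable {L C : Type*} [Order.Frame L] [CompleteLattice C] {e : L → C}

theorem le_of_forall_sInf_image_le (hd : IsCanonicalDense e) {u v : C}
    (h : ∀ F : Set L, IsScottOpenFilter F → sInf (e '' F) ≤ u → sInf (e '' F) ≤ v) :
    u ≤ v :=
  hd u v fun F _ hF hu hv => (h F hF hu).trans hv

theorem le_of_forall_le_apply (hd : IsCanonicalDense e) {u v : C}
    (h : ∀ a : L, v ≤ e a → u ≤ e a) : u ≤ v :=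
  hd u v fun _ a _ hu hv => hu.trans (h a hv)

theorem orderIso_apply_le (hd : IsCanonicalDense e) {φ : C ≃o C} (hφ : ∀ a, φ (e a) = e a)
    (u : C) : φ u ≤ u :=
  hd.le_of_forall_le_apply fun a hu => (φ.monotone hu).trans_eq (hφ a)

theorem orderIso_eq_refl (hd : IsCanonicalDense e) {φ : C ≃o C} (hφ : ∀ a, φ (e a) = e a) :
    φ = OrderIso.refl C := by
  have hφ_symm : ∀ a, φ.symm (e a) = e a := fun a => φ.symm_apply_eq.2 (hφ a).symm
  ext u
  exact le_antisymm (hd.orderIso_apply_le hφ u)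
    (by simpa using φ.monotone (hd.orderIso_apply_le hφ_symm u))

end IsCanonicalDense

theorem IsCanonicalCompact.sInf_image_le_iff {L C : Type*} [Order.Frame L] [CompleteLattice C]
    {e : L → C} (hc : IsCanonicalCompact e) {F : Set L} (hF : IsScottOpenFilter F) {a : L} :
    sInf (e '' F) ≤ e a ↔ a ∈ F :=
  ⟨hc F a hF, fun ha => sInf_le (Set.mem_image_of_mem e ha)⟩

section ComparisonMap

variable {L C C' : Type*} [Order.Frame L] [CompleteLattice C] [CompleteLattice C']
  {e : L → C} {e' : L → C'}

noncomputable def comparisonMap (e : L → C) (e' : L → C') (v : C') : C :=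
  sSup { x : C | ∃ F : Set L, IsScottOpenFilter F ∧ sInf (e' '' F) ≤ v ∧ x = sInf (e '' F) }

theorem comparisonMap_mono (e : L → C) (e' : L → C') : Monotone (comparisonMap e e') :=
  fun _ _ huv => sSup_le_sSup fun _ ⟨F, hF, hv, hx⟩ => ⟨F, hF, hv.trans huv, hx⟩

theorem sInf_image_le_comparisonMap {F : Set L} (hF : IsScottOpenFilter F) {v : C'}
    (h : sInf (e' '' F) ≤ v) : sInf (e '' F) ≤ comparisonMap e e' v :=
  le_sSup ⟨F, hF, h, rfl⟩

theorem comparisonMap_le (hc' : IsCanonicalCompact e') {v : C'} {a : L} (h : v ≤ e' a) :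
    comparisonMap e e' v ≤ e a := by
  refine sSup_le ?_
  rintro _ ⟨F, hF, hv, rfl⟩
  exact sInf_le (Set.mem_image_of_mem e ((hc'.sInf_image_le_iff hF).1 (hv.trans h)))

theorem comparisonMap_apply (hd : IsCanonicalDense e) (hc : IsCanonicalCompact e)
    (hc' : IsCanonicalCompact e') (a : L) : comparisonMap e e' (e' a) = e a := by
  refine le_antisymm (comparisonMap_le hc' le_rfl) (hd.le_of_forall_sInf_image_le ?_)
  intro F hF ha
  have ha' : sInf (e' '' F) ≤ e' a :=
    (hc'.sInf_image_le_iff hF).2 ((hc.sInf_image_le_iff hF).1 ha)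
  exact sInf_image_le_comparisonMap hF ha'

theorem comparisonMap_comparisonMap (hd : IsCanonicalDense e) (hc : IsCanonicalCompact e)
    (hc' : IsCanonicalCompact e') (u : C) : comparisonMap e e' (comparisonMap e' e u) = u := by
  apply le_antisymm
  · refine sSup_le ?_
    rintro _ ⟨F, hF, hFu, rfl⟩
    refine hd.le_of_forall_le_apply fun a hua => ?_
    have ha : a ∈ F := (hc'.sInf_image_le_iff hF).1 (hFu.trans (comparisonMap_le hc hua))
    exact (hc.sInf_image_le_iff hF).2 ha
  · exact hd.le_of_forall_sInf_image_le fun F hF hFu =>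
      sInf_image_le_comparisonMap hF (sInf_image_le_comparisonMap hF hFu)

noncomputable def comparisonIso (hd : IsCanonicalDense e) (hc : IsCanonicalCompact e)
    (hd' : IsCanonicalDense e') (hc' : IsCanonicalCompact e') : C' ≃o C :=
  Equiv.toOrderIso
    ⟨comparisonMap e e', comparisonMap e' e, comparisonMap_comparisonMap hd' hc' hc,
      comparisonMap_comparisonMap hd hc hc'⟩
    (comparisonMap_mono e e') (comparisonMap_mono e' e)

end ComparisonMap

theorem canonicalExtension_unique_general {L C C' : Type*} [Order.Frame L] [CompleteLattice C]
    [CompleteLattice C'] (e : L → C) (e' : L → C')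
    (hdense : IsCanonicalDense e) (hcompact : IsCanonicalCompact e)
    (hdense' : IsCanonicalDense e') (hcompact' : IsCanonicalCompact e') :
    ∃! ι : C' ≃o C, ∀ a : L, ι (e' a) = e a := by
  set κ := comparisonIso hdense hcompact hdense' hcompact'
  have hκ : ∀ a, κ (e' a) = e a := comparisonMap_apply hdense hcompact hcompact'
  refine ⟨κ, hκ, fun ι hι => ?_⟩
  have hfix : ∀ a, (ι.trans κ.symm) (e' a) = e' a := fun a => by
    simp [hι a, κ.symm_apply_eq, hκ a]
  have hrefl := hdense'.orderIso_eq_refl hfix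
  ext v
  simpa using congrArg (κ ·) (DFunLike.congr_fun hrefl v)

/-- Uniqueness of canonical extensions: if `e : L → C` and `e' : L → C'` are both
monotone, dense and compact maps from a frame `L` into complete lattices, then there
is a unique complete lattice (order) isomorphism `ι : C' → C` with `ι ∘ e' = e`. -/
theorem canonicalExtension_unique {L C C' : Type*} [Order.Frame L] [CompleteLattice C]
    [CompleteLattice C'] (e : L → C) (e' : L → C')
    (hmono : Monotone e) (hdense : IsCanonicalDense e) (hcompact : IsCanonicalCompact e)
    (hmono' : Monotone e') (hdense' : IsCanonicalDense e') (hcompact' : IsCanonicalCompact e') :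
    ∃! ι : C' ≃o C, ∀ a : L, ι (e' a) = e a :=
  canonicalExtension_unique_general e e' hdense hcompact hdense' hcompact'
end

section
/- For a sober topological space X, the inclusion of the frame of opens O(X) into the complete lattice of saturated subsets Up(X) is dense and compact, i.e., it is a canonical extension of the frame O(X). -/
open TopologicalSpace

theorem InfPrime.of_maximal_notMem {L : Type*} [DistribLattice L] {F : Set L}
    (hF_upper : IsUpperSet F) (hF_inf : InfClosed F) (hF_ne : F.Nonempty) {m : L}
    (hm : Maximal (· ∉ F) m) : InfPrime m := by
  have sup_mem : ∀ b, ¬b ≤ m → m ⊔ b ∈ F := fun b hb ↦ by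
    by_contra h
    exact hm.not_prop_of_gt (left_lt_sup.2 hb) h
  refine ⟨fun hmax ↦ ?_, fun b c hbc ↦ ?_⟩
  · obtain ⟨f, hf⟩ := hF_ne
    exact hm.prop (hF_upper (le_sup_right.trans (hmax le_sup_left)) hf)
  · by_contra! h
    have := hF_inf (sup_mem b h.1) (sup_mem c h.2)
    rw [← sup_inf_left, sup_eq_left.2 hbc] at this
    exact hm.prop this

namespace IsScottOpenFilter

variable {L : Type*} [Order.Frame L] {F : Set L}

theorem isUpperSet (hF : IsScottOpenFilter F) : IsUpperSet F :=
  fun _ _ hab ha ↦ hF.mem_of_le ha hab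

theorem infClosed (hF : IsScottOpenFilter F) : InfClosed F :=
  fun _ ha _ hb ↦ hF.inf_mem ha hb

theorem exists_le_maximal_notMem (hF : IsScottOpenFilter F) {a : L} (ha : a ∉ F) :
    ∃ m, a ≤ m ∧ Maximal (· ∉ F) m := by
  refine zorn_le_nonempty₀ {x | x ∉ F} (fun c hcF hc y hy ↦ ?_) a ha
  refine ⟨sSup c, fun hsup ↦ ?_, fun z hz ↦ le_sSup hz⟩
  obtain ⟨d, hdc, hdF⟩ := hF.scottOpen c ⟨y, hy⟩ hc.directedOn hsup
  exact hcF hdc hdF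

theorem infPrime_of_maximal_notMem (hF : IsScottOpenFilter F) {m : L}
    (hm : Maximal (· ∉ F) m) : InfPrime m :=
  .of_maximal_notMem hF.isUpperSet hF.infClosed ⟨⊤, hF.top_mem⟩ hm

end IsScottOpenFilter

section

variable {X : Type*} [TopologicalSpace X]

theorem isScottOpenFilter_setOf_mem (x : X) : IsScottOpenFilter {U : Opens X | x ∈ U} where
  mem_of_le _ _ ha hab := hab ha
  top_mem := trivial
  inf_mem _ _ ha hb := ⟨ha, hb⟩
  scottOpen _ _ _ hD := Opens.mem_sSup.1 hD

theorem biInter_setOf_mem_eq (x : X) :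
    ⋂ U ∈ {U : Opens X | x ∈ U}, (U : Set X) = {y | y ⤳ x} := by
  ext y
  simp only [Set.mem_iInter, Set.mem_ofPred_eq, specializes_iff_forall_open]
  exact ⟨fun h s hs hxs ↦ h ⟨s, hs⟩ hxs, fun h U hxU ↦ h U U.isOpen hxU⟩

theorem TopologicalSpace.Opens.isIrreducible_compl_of_infPrime {m : Opens X} (hm : InfPrime m) :
    IsIrreducible (m : Set X)ᶜ := by
  have meets_compl : ∀ U : Opens X, ((m : Set X)ᶜ ∩ U).Nonempty ↔ ¬U ≤ m := fun U ↦ by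
    rw [Set.inter_comm, Set.inter_compl_nonempty_iff]
    exact SetLike.coe_subset_coe.not
  refine ⟨?_, fun U V hU hV hmU hmV ↦ ?_⟩
  · simpa [Set.nonempty_compl] using hm.ne_top
  · change ((m : Set X)ᶜ ∩ ((⟨U, hU⟩ ⊓ ⟨V, hV⟩ : Opens X) : Set X)).Nonempty
    rw [meets_compl, hm.inf_le]
    exact not_or_intro ((meets_compl ⟨U, hU⟩).1 hmU) ((meets_compl ⟨V, hV⟩).1 hmV)

theorem IsScottOpenFilter.mem_of_biInter_subset [QuasiSober X] {F : Set (Opens X)}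
    (hF : IsScottOpenFilter F) {a : Opens X} (ha : ⋂ U ∈ F, (U : Set X) ⊆ a) : a ∈ F := by
  by_contra haF
  obtain ⟨m, ham, hm⟩ := hF.exists_le_maximal_notMem haF
  have hirr := Opens.isIrreducible_compl_of_infPrime (hF.infPrime_of_maximal_notMem hm)
  have hx := hirr.isGenericPoint_genericPoint m.isOpen.isClosed_compl
  have hxF : hirr.genericPoint ∈ ⋂ U ∈ F, (U : Set X) := by
    refine Set.mem_iInter₂.2 fun V hV ↦ (hx.mem_open_set_iff V.isOpen).2 ?_
    rw [Set.inter_comm, Set.inter_compl_nonempty_iff]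
    exact fun hVm ↦ hm.prop (hF.mem_of_le hV hVm)
  exact hx.mem (ham (ha hxF))

theorem subset_of_forall_scottOpenFilter {u v : Set X}
    (hu : ∀ ⦃x⦄, x ∈ u → ∀ ⦃y⦄, y ⤳ x → y ∈ u) (hv : ∀ ⦃x⦄, x ∈ v → ∀ ⦃y⦄, y ⤳ x → y ∈ v)
    (h : ∀ (F : Set (Opens X)) (a : Opens X), IsScottOpenFilter F →
      ⋂ U ∈ F, (U : Set X) ⊆ u → v ⊆ a → ⋂ U ∈ F, (U : Set X) ⊆ a) :
    u ⊆ v := by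
  intro x hxu
  by_contra hxv
  have hva : v ⊆ (closure {x})ᶜ := fun z hz hxz ↦
    hxv (hv hz (specializes_iff_mem_closure.2 hxz))
  have hFa := h _ ⟨_, isClosed_closure.isOpen_compl⟩ (isScottOpenFilter_setOf_mem x)
    (biInter_setOf_mem_eq x ▸ fun _ hy ↦ hu hxu hy) hva
  rw [biInter_setOf_mem_eq] at hFa
  exact hFa (specializes_refl x) (subset_closure rfl)

end

open TopologicalSpace in
theorem opens_into_saturated_isCanonicalExtension_general {X : Type*} [TopologicalSpace X]
    [QuasiSober X] :
    (∀ u v : Set X,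
      (∀ ⦃x⦄, x ∈ u → ∀ ⦃y⦄, (∀ U : Set X, IsOpen U → x ∈ U → y ∈ U) → y ∈ u) →
      (∀ ⦃x⦄, x ∈ v → ∀ ⦃y⦄, (∀ U : Set X, IsOpen U → x ∈ U → y ∈ U) → y ∈ v) →
      (∀ (F : Set (Opens X)) (a : Opens X), IsScottOpenFilter F →
        (⋂ U ∈ F, (U : Set X)) ⊆ u → v ⊆ (a : Set X) →
        (⋂ U ∈ F, (U : Set X)) ⊆ (a : Set X)) →
      u ⊆ v) ∧
    (∀ (F : Set (Opens X)) (a : Opens X), IsScottOpenFilter F →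
      (⋂ U ∈ F, (U : Set X)) ⊆ (a : Set X) → a ∈ F) := by
  refine ⟨fun u v hu hv h ↦ subset_of_forall_scottOpenFilter ?_ ?_ h,
    fun F a hF ha ↦ hF.mem_of_biInter_subset ha⟩
  · exact fun x hx y hyx ↦ hu hx (specializes_iff_forall_open.1 hyx)
  · exact fun x hx y hyx ↦ hv hx (specializes_iff_forall_open.1 hyx)

open TopologicalSpace in
/-- For a sober space `X`, the inclusion of the frame of opens into the complete
lattice of saturated subsets (upsets for the specialisation order, in which meets are
intersections and the order is inclusion) is dense and compact, i.e. it is a canonical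
extension of `O(X)`. -/
theorem opens_into_saturated_isCanonicalExtension {X : Type*} [TopologicalSpace X]
    [QuasiSober X] [T0Space X] :
    (∀ u v : Set X,
      (∀ ⦃x⦄, x ∈ u → ∀ ⦃y⦄, (∀ U : Set X, IsOpen U → x ∈ U → y ∈ U) → y ∈ u) →
      (∀ ⦃x⦄, x ∈ v → ∀ ⦃y⦄, (∀ U : Set X, IsOpen U → x ∈ U → y ∈ U) → y ∈ v) →
      (∀ (F : Set (Opens X)) (a : Opens X), IsScottOpenFilter F →
        (⋂ U ∈ F, (U : Set X)) ⊆ u → v ⊆ (a : Set X) →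
        (⋂ U ∈ F, (U : Set X)) ⊆ (a : Set X)) →
      u ⊆ v) ∧
    (∀ (F : Set (Opens X)) (a : Opens X), IsScottOpenFilter F →
      (⋂ U ∈ F, (U : Set X)) ⊆ (a : Set X) → a ∈ F) :=
  opens_into_saturated_isCanonicalExtension_general
end

section
/- Let h : L → M be a preframe homomorphism between frames, with canonical extensions e_L : L → L^δ and e_M : M → M^δ. Define the σ-extension h^σ(u) = ⋁{⋀e_M[h[F]] | F Scott-open filter of L, ⋀e_L[F] ≤ u}. Then h^σ ∘ e_L = e_M ∘ h, i.e., h^σ extends h. -/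
/-- A preframe homomorphism between frames: preserves finite meets and directed joins. -/
def IsPreframeHom {L M : Type*} [Order.Frame L] [Order.Frame M] (f : L → M) : Prop :=
  f ⊤ = ⊤ ∧ (∀ a b : L, f (a ⊓ b) = f a ⊓ f b) ∧
    ∀ D : Set L, D.Nonempty → DirectedOn (· ≤ ·) D → f (sSup D) = sSup (f '' D)

/-! Compactness of `L^δ` forces every Scott-open filter `F` with `⋀ e_L[F] ≤ e_L a` to contain `a`,
so each term of the join defining `h^σ (e_L a)` lies below `e_M (h a)`. Conversely, by density of
`M^δ` it suffices to bound `⋀ e_M[G]` for Scott-open filters `G ∋ h a` (compactness of `M^δ`), and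
`h⁻¹ G` is a Scott-open filter containing `a` whose term `⋀ e_M[h[h⁻¹ G]]` lies above `⋀ e_M[G]`. -/

section

variable {L M Lδ Mδ : Type*} [Order.Frame L]

theorem IsPreframeHom.monotone [Order.Frame M] {f : L → M} (hf : IsPreframeHom f) : Monotone f :=
  fun a b hab => inf_eq_left.1 (by rw [← hf.2.1, inf_eq_left.2 hab])

theorem IsScottOpenFilter.preimage [Order.Frame M] {f : L → M} (hf : IsPreframeHom f) {G : Set M}
    (hG : IsScottOpenFilter G) : IsScottOpenFilter (f ⁻¹' G) where
  mem_of_le _ _ ha hab := hG.mem_of_le ha (hf.monotone hab)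
  top_mem := by simpa only [Set.mem_preimage, hf.1] using hG.top_mem
  inf_mem a b ha hb := by simpa only [Set.mem_preimage, hf.2.1] using hG.inf_mem ha hb
  scottOpen D hD hDdir hsup := by
    have hsup' : sSup (f '' D) ∈ G := hf.2.2 D hD hDdir ▸ hsup
    obtain ⟨_, ⟨d, hd, rfl⟩, hdG⟩ :=
      hG.scottOpen (f '' D) (hD.image f) (hDdir.mono_comp fun _ _ hxy => hf.monotone hxy) hsup'
    exact ⟨d, hd, hdG⟩

variable [CompleteLattice Lδ] [CompleteLattice Mδ]

def sigmaExtension (eL : L → Lδ) (eM : M → Mδ) (h : L → M) (u : Lδ) : Mδ :=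
  sSup {w : Mδ | ∃ F : Set L, IsScottOpenFilter F ∧ sInf (eL '' F) ≤ u ∧
    w = sInf (eM '' (h '' F))}

theorem sigmaExtension_apply_le {eL : L → Lδ} (hLcompact : IsCanonicalCompact eL) (eM : M → Mδ)
    (h : L → M) (a : L) : sigmaExtension eL eM h (eL a) ≤ eM (h a) :=
  sSup_le fun _ ⟨F, hF, hFa, hw⟩ =>
    hw ▸ sInf_le ⟨h a, ⟨a, hLcompact F a hF hFa, rfl⟩, rfl⟩

theorem le_sigmaExtension_apply [Order.Frame M] (eL : L → Lδ) {eM : M → Mδ}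
    (hMdense : IsCanonicalDense eM) (hMcompact : IsCanonicalCompact eM) {h : L → M}
    (hh : IsPreframeHom h) (a : L) :
    eM (h a) ≤ sigmaExtension eL eM h (eL a) := by
  refine hMdense _ _ fun G b hG hGa hb => ?_
  have haG : a ∈ h ⁻¹' G := hMcompact G (h a) hG hGa
  calc sInf (eM '' G) ≤ sInf (eM '' (h '' (h ⁻¹' G))) :=
        sInf_le_sInf (Set.image_mono (Set.image_preimage_subset h G))
    _ ≤ sigmaExtension eL eM h (eL a) := le_sSup ⟨_, hG.preimage hh, sInf_le ⟨a, haG, rfl⟩, rfl⟩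
    _ ≤ eM b := hb

end

theorem sigmaExtension_extends_general {L M Lδ Mδ : Type*} [Order.Frame L] [Order.Frame M]
    [CompleteLattice Lδ] [CompleteLattice Mδ] (eL : L → Lδ) (eM : M → Mδ)
    (hLcompact : IsCanonicalCompact eL)
    (hMdense : IsCanonicalDense eM) (hMcompact : IsCanonicalCompact eM)
    (h : L → M) (hh : IsPreframeHom h) :
    ∀ a : L,
      sSup {w : Mδ | ∃ F : Set L, IsScottOpenFilter F ∧ sInf (eL '' F) ≤ eL a ∧
          w = sInf (eM '' (h '' F))} = eM (h a) := fun a =>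
  le_antisymm (sigmaExtension_apply_le hLcompact eM h a)
    (le_sigmaExtension_apply eL hMdense hMcompact hh a)

/-- For a preframe homomorphism `h : L → M` between frames with canonical extensions
`e_L : L → L^δ` and `e_M : M → M^δ`, the σ-extension
`h^σ(u) = ⋁{⋀ e_M[h[F]] | F Scott-open, ⋀ e_L[F] ≤ u}` extends `h`:
`h^σ(e_L a) = e_M (h a)` for all `a`. -/
theorem sigmaExtension_extends {L M Lδ Mδ : Type*} [Order.Frame L] [Order.Frame M]
    [CompleteLattice Lδ] [CompleteLattice Mδ] (eL : L → Lδ) (eM : M → Mδ)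
    (hLmono : Monotone eL) (hLdense : IsCanonicalDense eL) (hLcompact : IsCanonicalCompact eL)
    (hMmono : Monotone eM) (hMdense : IsCanonicalDense eM) (hMcompact : IsCanonicalCompact eM)
    (h : L → M) (hh : IsPreframeHom h) :
    ∀ a : L,
      sSup {w : Mδ | ∃ F : Set L, IsScottOpenFilter F ∧ sInf (eL '' F) ≤ eL a ∧
          w = sInf (eM '' (h '' F))} = eM (h a) :=
  sigmaExtension_extends_general eL eM hLcompact hMdense hMcompact h hh
end

section
/- Let h : L → M be a perfect frame homomorphism between frames. Then the common σ- and π-extension h^δ : L^δ → M^δ preserves arbitrary meets and arbitrary joins (it is a complete lattice homomorphism). -/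
/-- A frame homomorphism: preserves finite meets and arbitrary joins. -/
def IsFrameHom {L M : Type*} [Order.Frame L] [Order.Frame M] (h : L → M) : Prop :=
  h ⊤ = ⊤ ∧ (∀ a b : L, h (a ⊓ b) = h a ⊓ h b) ∧ ∀ S : Set L, h (sSup S) = sSup (h '' S)

/-- A monotone map `h : L → M` is perfect if for every Scott-open filter `F` of `L`,
the filter generated by `h[F]` (upward closure of finite meets of elements of `h[F]`)
is Scott-open. -/
def IsPerfect {L M : Type*} [Order.Frame L] [Order.Frame M] (h : L → M) : Prop :=
  ∀ F : Set L, IsScottOpenFilter F →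
    IsScottOpenFilter {b : M | ∃ s : Finset L, (↑s : Set L) ⊆ F ∧ s.inf h ≤ b}

/-- The σ-extension of a map `h : L → M` relative to canonical extensions
`eL : L → Lδ`, `eM : M → Mδ`. -/
def sigmaExt {L M Lδ Mδ : Type*} [Order.Frame L] [Order.Frame M]
    [CompleteLattice Lδ] [CompleteLattice Mδ] (eL : L → Lδ) (eM : M → Mδ)
    (h : L → M) (u : Lδ) : Mδ :=
  sSup {w : Mδ | ∃ F : Set L, IsScottOpenFilter F ∧ sInf (eL '' F) ≤ u ∧
      w = sInf (eM '' (h '' F))}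

/-- The π-extension of a map `h : L → M` relative to canonical extensions
`eL : L → Lδ`, `eM : M → Mδ`. -/
def piExt {L M Lδ Mδ : Type*} [Order.Frame L] [Order.Frame M]
    [CompleteLattice Lδ] [CompleteLattice Mδ] (eL : L → Lδ) (eM : M → Mδ)
    (h : L → M) (u : Lδ) : Mδ :=
  sInf {w : Mδ | ∃ a : L, u ≤ eL a ∧ w = eM (h a)}

/-!
Since `h` is a frame homomorphism, the preimage `h⁻¹ G` of a Scott-open filter is again one,
and compactness of `eM` shows that the closed element `⋀ eL[h⁻¹ G]` lies below `u` whenever `⋀ eM[G]`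
lies below `h^π u`. By density this gives `h^π ≤ h^σ` (the reverse inequality is compactness
of `eL`) and the preservation of meets by `h^π`. Joins are handled by the upper adjoint
`b ↦ ⋁ {a | h a ≤ b}` of `h`; perfectness is what lets compactness of `eM` be applied to the
filter generated by `h[F]`, producing an `a ∈ F` with `h a ≤ b`.
-/

namespace IsScottOpenFilter

variable {L : Type*} [Order.Frame L] {F : Set L}

lemma finset_inf_mem (hF : IsScottOpenFilter F) {t : Finset L} (ht : (↑t : Set L) ⊆ F) :
    t.inf id ∈ F :=
  Finset.inf_mem F hF.top_mem (fun _ ha _ hb => hF.inf_mem ha hb) t id fun _ ha => ht ha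

end IsScottOpenFilter

namespace IsFrameHom

variable {L M : Type*} [Order.Frame L] [Order.Frame M] {h : L → M}

lemma monotone (hh : IsFrameHom h) : Monotone h := fun a b hab =>
  calc h a = h (a ⊓ b) := by rw [inf_eq_left.mpr hab]
    _ = h a ⊓ h b := hh.2.1 a b
    _ ≤ h b := inf_le_right

lemma map_finset_inf (hh : IsFrameHom h) (t : Finset L) : h (t.inf id) = t.inf h :=
  Finset.apply_inf_eq_inf_comp h hh.2.1 hh.1

lemma map_sSup_setOf_map_le (hh : IsFrameHom h) (b : M) : h (sSup {a | h a ≤ b}) ≤ b := by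
  rw [hh.2.2]
  exact sSup_le (Set.forall_mem_image.mpr fun _ ha => ha)

lemma isScottOpenFilter_preimage (hh : IsFrameHom h) {G : Set M} (hG : IsScottOpenFilter G) :
    IsScottOpenFilter (h ⁻¹' G) where
  mem_of_le _ _ ha hab := hG.mem_of_le ha (hh.monotone hab)
  top_mem := by simpa only [Set.mem_preimage, hh.1] using hG.top_mem
  inf_mem a b ha hb := by
    simpa only [Set.mem_preimage, hh.2.1] using hG.inf_mem ha hb
  scottOpen D hD hdir hsup := by
    rw [Set.mem_preimage, hh.2.2] at hsup
    obtain ⟨_, ⟨d, hdD, rfl⟩, hdG⟩ :=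
      hG.scottOpen _ (hD.image h) (hdir.mono_comp hh.monotone) hsup
    exact ⟨d, hdD, hdG⟩

end IsFrameHom

namespace IsCanonicalDense

variable {L C : Type*} [Order.Frame L] [CompleteLattice C] {e : L → C}

lemma le_of_forall_closed_le (hd : IsCanonicalDense e) {x y : C}
    (H : ∀ F : Set L, IsScottOpenFilter F → sInf (e '' F) ≤ x → sInf (e '' F) ≤ y) :
    x ≤ y :=
  hd x y fun F _ hF hFx hya => (H F hF hFx).trans hya

lemma le_of_forall_le_open (hd : IsCanonicalDense e) {x y : C}
    (H : ∀ a : L, y ≤ e a → x ≤ e a) : x ≤ y :=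
  hd x y fun _ a _ hFx hya => hFx.trans (H a hya)

end IsCanonicalDense

section Extensions

variable {L M Lδ Mδ : Type*} [Order.Frame L] [Order.Frame M]
  [CompleteLattice Lδ] [CompleteLattice Mδ] {eL : L → Lδ} {eM : M → Mδ} {h : L → M}

lemma sigmaExt_monotone : Monotone (sigmaExt eL eM h) := fun _ _ huv =>
  sSup_le_sSup fun _ ⟨F, hF, hFu, hw⟩ => ⟨F, hF, hFu.trans huv, hw⟩

lemma piExt_monotone : Monotone (piExt eL eM h) := fun _ _ huv =>
  sInf_le_sInf fun _ ⟨a, hva, hw⟩ => ⟨a, huv.trans hva, hw⟩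

lemma sigmaExt_le_piExt (hLcompact : IsCanonicalCompact eL) (u : Lδ) :
    sigmaExt eL eM h u ≤ piExt eL eM h u := by
  refine sSup_le fun _ ⟨F, hF, hFu, hw⟩ => le_sInf fun _ ⟨a, hua, hw'⟩ => ?_
  rw [hw, hw']
  exact sInf_le ⟨h a, ⟨a, hLcompact F a hF (hFu.trans hua), rfl⟩, rfl⟩

lemma sInf_image_preimage_le_of_le_piExt (hLdense : IsCanonicalDense eL)
    (hMcompact : IsCanonicalCompact eM) {G : Set M} (hG : IsScottOpenFilter G) {u : Lδ}
    (hGu : sInf (eM '' G) ≤ piExt eL eM h u) : sInf (eL '' (h ⁻¹' G)) ≤ u :=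
  hLdense.le_of_forall_le_open fun a hua =>
    sInf_le ⟨a, hMcompact G (h a) hG (hGu.trans (sInf_le ⟨a, hua, rfl⟩)), rfl⟩

lemma piExt_le_sigmaExt (hLdense : IsCanonicalDense eL) (hMdense : IsCanonicalDense eM)
    (hMcompact : IsCanonicalCompact eM) (hh : IsFrameHom h) (u : Lδ) :
    piExt eL eM h u ≤ sigmaExt eL eM h u :=
  hMdense.le_of_forall_closed_le fun G hG hGu =>
    calc sInf (eM '' G) ≤ sInf (eM '' (h '' (h ⁻¹' G))) :=
          sInf_le_sInf (Set.image_mono (Set.image_preimage_subset h G))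
      _ ≤ sigmaExt eL eM h u :=
          le_sSup ⟨_, hh.isScottOpenFilter_preimage hG,
            sInf_image_preimage_le_of_le_piExt hLdense hMcompact hG hGu, rfl⟩

lemma piExt_sInf (hLdense : IsCanonicalDense eL) (hLcompact : IsCanonicalCompact eL)
    (hMdense : IsCanonicalDense eM) (hMcompact : IsCanonicalCompact eM) (hh : IsFrameHom h)
    (S : Set Lδ) : piExt eL eM h (sInf S) = sInf (piExt eL eM h '' S) := by
  refine le_antisymm (le_sInf fun _ ⟨s, hs, hw⟩ => hw ▸ piExt_monotone (sInf_le hs)) ?_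
  refine le_sInf fun _ ⟨a, ha, hw⟩ => hw ▸ hMdense.le_of_forall_closed_le fun G hG hGS => ?_
  have hGs : sInf (eL '' (h ⁻¹' G)) ≤ sInf S := le_sInf fun s hs =>
    sInf_image_preimage_le_of_le_piExt hLdense hMcompact hG (hGS.trans (sInf_le ⟨s, hs, rfl⟩))
  exact sInf_le ⟨h a, hLcompact _ a (hh.isScottOpenFilter_preimage hG) (hGs.trans ha), rfl⟩

lemma IsPerfect.exists_mem_map_le (hperf : IsPerfect h) (hh : IsFrameHom h)
    (hMcompact : IsCanonicalCompact eM) {F : Set L} (hF : IsScottOpenFilter F) {b : M}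
    (hFb : sInf (eM '' (h '' F)) ≤ eM b) : ∃ a ∈ F, h a ≤ b := by
  have hgen : sInf (eM '' {b' | ∃ t : Finset L, (↑t : Set L) ⊆ F ∧ t.inf h ≤ b'}) ≤ eM b := by
    refine le_trans (sInf_le_sInf (Set.image_mono ?_)) hFb
    rintro _ ⟨a, haF, rfl⟩
    exact ⟨{a}, by simpa using haF, by simp⟩
  obtain ⟨t, htF, htb⟩ := hMcompact _ b (hperf F hF) hgen
  exact ⟨t.inf id, hF.finset_inf_mem htF, (hh.map_finset_inf t).trans_le htb⟩

lemma sigmaExt_sSup (hLdense : IsCanonicalDense eL) (hLcompact : IsCanonicalCompact eL)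
    (hMdense : IsCanonicalDense eM) (hMmono : Monotone eM) (hMcompact : IsCanonicalCompact eM)
    (hh : IsFrameHom h) (hperf : IsPerfect h) (S : Set Lδ) :
    sigmaExt eL eM h (sSup S) = sSup (sigmaExt eL eM h '' S) := by
  refine le_antisymm ?_ (sSup_le fun _ ⟨s, hs, hw⟩ => hw ▸ sigmaExt_monotone (le_sSup hs))
  refine hMdense.le_of_forall_le_open fun b hb => ?_
  have hS : sSup S ≤ eL (sSup {a | h a ≤ b}) := sSup_le fun s hs =>
    hLdense.le_of_forall_closed_le fun F hF hFs => by
      have hFb : sInf (eM '' (h '' F)) ≤ eM b :=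
        calc sInf (eM '' (h '' F)) ≤ sigmaExt eL eM h s := le_sSup ⟨F, hF, hFs, rfl⟩
          _ ≤ sSup (sigmaExt eL eM h '' S) := le_sSup ⟨s, hs, rfl⟩
          _ ≤ eM b := hb
      obtain ⟨a, haF, hab⟩ := hperf.exists_mem_map_le hh hMcompact hF hFb
      exact sInf_le ⟨_, hF.mem_of_le haF (le_sSup hab), rfl⟩
  calc sigmaExt eL eM h (sSup S) ≤ piExt eL eM h (sSup S) := sigmaExt_le_piExt hLcompact _
    _ ≤ eM (h (sSup {a | h a ≤ b})) := sInf_le ⟨_, hS, rfl⟩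
    _ ≤ eM b := hMmono (hh.map_sSup_setOf_map_le b)

end Extensions

theorem perfect_frameHom_extension_complete_general {L M Lδ Mδ : Type*} [Order.Frame L]
    [Order.Frame M] [CompleteLattice Lδ] [CompleteLattice Mδ] (eL : L → Lδ) (eM : M → Mδ)
    (hLdense : IsCanonicalDense eL) (hLcompact : IsCanonicalCompact eL)
    (hMmono : Monotone eM) (hMdense : IsCanonicalDense eM) (hMcompact : IsCanonicalCompact eM)
    (h : L → M) (hh : IsFrameHom h) (hperf : IsPerfect h) :
    (∀ u : Lδ, sigmaExt eL eM h u = piExt eL eM h u) ∧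
    (∀ S : Set Lδ, sigmaExt eL eM h (sInf S) = sInf (sigmaExt eL eM h '' S)) ∧
    (∀ S : Set Lδ, sigmaExt eL eM h (sSup S) = sSup (sigmaExt eL eM h '' S)) := by
  have hσπ : sigmaExt eL eM h = piExt eL eM h := funext fun u =>
    le_antisymm (sigmaExt_le_piExt hLcompact u)
      (piExt_le_sigmaExt hLdense hMdense hMcompact hh u)
  refine ⟨congrFun hσπ, fun S => ?_,
    sigmaExt_sSup hLdense hLcompact hMdense hMmono hMcompact hh hperf⟩
  rw [hσπ]
  exact piExt_sInf hLdense hLcompact hMdense hMcompact hh S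

/-- For a perfect frame homomorphism `h : L → M`, the σ- and π-extensions coincide,
and the common extension `h^δ : L^δ → M^δ` preserves arbitrary meets and arbitrary
joins, i.e. it is a complete lattice homomorphism. -/
theorem perfect_frameHom_extension_complete {L M Lδ Mδ : Type*} [Order.Frame L]
    [Order.Frame M] [CompleteLattice Lδ] [CompleteLattice Mδ] (eL : L → Lδ) (eM : M → Mδ)
    (hLmono : Monotone eL) (hLdense : IsCanonicalDense eL) (hLcompact : IsCanonicalCompact eL)
    (hMmono : Monotone eM) (hMdense : IsCanonicalDense eM) (hMcompact : IsCanonicalCompact eM)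
    (h : L → M) (hh : IsFrameHom h) (hperf : IsPerfect h) :
    (∀ u : Lδ, sigmaExt eL eM h u = piExt eL eM h u) ∧
    (∀ S : Set Lδ, sigmaExt eL eM h (sInf S) = sInf (sigmaExt eL eM h '' S)) ∧
    (∀ S : Set Lδ, sigmaExt eL eM h (sSup S) = sSup (sigmaExt eL eM h '' S)) :=
  perfect_frameHom_extension_complete_general eL eM hLdense hLcompact hMmono hMdense hMcompact h hh
    hperf
end
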